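/- arXiv:1807.07851 — 2 statements merged into one kernel-verified Lean document; each statement's English description precedes it below -/
import Mathlib

section
/- Let R be a commutative ring and a, b ⊆ R ideals. Then Γ̄_a(M) = Γ̄_b(M) for every R-module M if and only if √a = √b. -/
/-!
`Γ̄_a` only sees `√a`: if `r ^ m ∈ a` and `(r ^ m) ^ n • x = 0` then `r ^ (m * n) • x = 0`.
Conversely, `1 ∈ R ⧸ a` lies in `Γ̄_b(R ⧸ a)` exactly when every element of `b` has a power in `a`,
so testing on `R ⧸ a` and `R ⧸ b` recovers both inclusions of radicals.
-/

/-- The small `a`-torsion submodule: elements killed by some power of `a`. -/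
def smallTorsion {R : Type*} [CommRing R] (a : Ideal R) (M : Type*) [AddCommGroup M]
    [Module R M] : Submodule R M where
  carrier := {x | ∃ n : ℕ, ∀ r ∈ a ^ n, r • x = 0}
  zero_mem' := ⟨0, fun r _ => smul_zero r⟩
  add_mem' := by
    rintro x y ⟨m, hm⟩ ⟨n, hn⟩
    refine ⟨m + n, fun r hr => ?_⟩
    have h1 : r ∈ a ^ m := Ideal.pow_le_pow_right (Nat.le_add_right m n) hr
    have h2 : r ∈ a ^ n := Ideal.pow_le_pow_right (Nat.le_add_left n m) hr
    rw [smul_add, hm r h1, hn r h2, add_zero]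
  smul_mem' := by
    rintro c x ⟨n, hn⟩
    refine ⟨n, fun r hr => ?_⟩
    rw [smul_smul, mul_comm, ← smul_smul, hn r hr, smul_zero]

/-- The large `a`-torsion submodule: elements killed by a power of each element of `a`. -/
def largeTorsion {R : Type*} [CommRing R] (a : Ideal R) (M : Type*) [AddCommGroup M]
    [Module R M] : Submodule R M where
  carrier := {x | ∀ r ∈ a, ∃ n : ℕ, r ^ n • x = 0}
  zero_mem' := fun r _ => ⟨1, smul_zero _⟩
  add_mem' := by
    rintro x y hx hy r hr
    obtain ⟨m, hm⟩ := hx r hr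
    obtain ⟨n, hn⟩ := hy r hr
    refine ⟨m + n, ?_⟩
    have hx0 : r ^ (m + n) • x = 0 := by rw [pow_add, mul_comm, mul_smul, hm, smul_zero]
    have hy0 : r ^ (m + n) • y = 0 := by rw [pow_add, mul_smul, hn, smul_zero]
    rw [smul_add, hx0, hy0, add_zero]
  smul_mem' := by
    intro c x hx r hr
    obtain ⟨n, hn⟩ := hx r hr
    exact ⟨n, by rw [smul_smul, mul_comm, ← smul_smul, hn, smul_zero]⟩

/-- The weak assassin of `M`: primes minimal over the annihilator of some element. -/
def weakAssassin (R : Type*) [CommRing R] (M : Type*) [AddCommGroup M] [Module R M] :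
    Set (Ideal R) :=
  {p | ∃ x : M, p ∈ (Ideal.torsionOf R M x).minimalPrimes}

universe u

theorem largeTorsion_radical {R : Type*} [CommRing R] (a : Ideal R) (M : Type*)
    [AddCommGroup M] [Module R M] : largeTorsion a.radical M = largeTorsion a M := by
  refine le_antisymm (fun x hx r hr => hx r (Ideal.le_radical hr)) fun x hx r hr => ?_
  obtain ⟨m, hm⟩ := hr
  obtain ⟨n, hn⟩ := hx _ hm
  exact ⟨m * n, by rwa [pow_mul]⟩

theorem one_mem_largeTorsion_quotient_iff {R : Type*} [CommRing R] {a b : Ideal R} :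
    (1 : R ⧸ a) ∈ largeTorsion b (R ⧸ a) ↔ b ≤ a.radical := by
  have smul_one_eq_zero (r : R) : r • (1 : R ⧸ a) = 0 ↔ r ∈ a := by
    rw [Algebra.smul_def, mul_one, Ideal.Quotient.algebraMap_eq, Ideal.Quotient.eq_zero_iff_mem]
  exact forall₂_congr fun r _ => exists_congr fun n => smul_one_eq_zero (r ^ n)

theorem le_radical_of_largeTorsion_quotient_eq {R : Type*} [CommRing R] {a b : Ideal R}
    (h : largeTorsion a (R ⧸ a) = largeTorsion b (R ⧸ a)) : b ≤ a.radical := by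
  rw [← one_mem_largeTorsion_quotient_iff, ← h, one_mem_largeTorsion_quotient_iff]
  exact Ideal.le_radical

/-- `Γ̄_a(M) = Γ̄_b(M)` for every `R`-module `M` iff `√a = √b`. -/
theorem stmt2 (R : Type u) [CommRing R] (a b : Ideal R) :
    (∀ (M : Type u) [AddCommGroup M] [Module R M], largeTorsion a M = largeTorsion b M) ↔
      a.radical = b.radical := by
  refine ⟨fun h => le_antisymm ?_ ?_, fun h M _ _ => ?_⟩
  · rw [Ideal.radical_le_radical_iff]
    exact le_radical_of_largeTorsion_quotient_eq (h (R ⧸ b)).symm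
  · rw [Ideal.radical_le_radical_iff]
    exact le_radical_of_largeTorsion_quotient_eq (h (R ⧸ a))
  · rw [← largeTorsion_radical a, ← largeTorsion_radical b, h]
end

section
/- Let R be a commutative ring and a ⊆ R an ideal. Then Γ_a(M) = Γ̄_a(M) for every R-module M if and only if a is half-centred, i.e. for every R-module M one has Γ_a(M) = M if and only if Assᶠ_R(M) ⊆ V(a). -/
/-!
An element `x` lies in `Γ̄_a(M)` iff `a ⊆ √(0 :_R x)`, i.e. iff `a` lies in every prime minimal
over `(0 :_R x)`; hence `Γ̄_a(M) = M` exactly when `Assᶠ_R(M) ⊆ V(a)`, so the equality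
`Γ_a = Γ̄_a` makes `a` half-centred. Conversely, `N = Γ̄_a(M)` satisfies
`Γ̄_a(N) = N`, so half-centredness gives `Γ_a(N) = N`, that is `Γ̄_a(M) ⊆ Γ_a(M)`.
-/

section Torsion

variable {R : Type*} [CommRing R] (a : Ideal R) {M N : Type*} [AddCommGroup M] [Module R M]
  [AddCommGroup N] [Module R N]

theorem smallTorsion_le_largeTorsion : smallTorsion a M ≤ largeTorsion a M := by
  rintro x ⟨n, hn⟩ r hr
  exact ⟨n, hn _ (Ideal.pow_mem_pow hr n)⟩

theorem map_mem_smallTorsion (f : N →ₗ[R] M) {x : N} (hx : x ∈ smallTorsion a N) :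
    f x ∈ smallTorsion a M := by
  obtain ⟨n, hn⟩ := hx
  exact ⟨n, fun r hr => by rw [← f.map_smul, hn r hr, f.map_zero]⟩

theorem mem_largeTorsion_iff_le_radical (x : M) :
    x ∈ largeTorsion a M ↔ a ≤ (Ideal.torsionOf R M x).radical :=
  forall₂_congr fun _ _ => exists_congr fun _ => (Ideal.mem_torsionOf_iff x _).symm

theorem largeTorsion_eq_top_iff :
    largeTorsion a M = ⊤ ↔ weakAssassin R M ⊆ {p : Ideal R | p.IsPrime ∧ a ≤ p} := by
  refine ⟨fun h p ⟨x, hp⟩ => ⟨hp.1.1, ?_⟩, fun h => eq_top_iff.2 fun x _ => ?_⟩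
  · have hx := (mem_largeTorsion_iff_le_radical a x).1 (h ▸ Submodule.mem_top)
    exact hx.trans (hp.1.1.radical_le_iff.2 hp.1.2)
  · rw [mem_largeTorsion_iff_le_radical, ← Ideal.sInf_minimalPrimes]
    exact le_sInf fun p hp => (h ⟨x, hp⟩).2

theorem largeTorsion_largeTorsion_eq_top : largeTorsion a (largeTorsion a M) = ⊤ := by
  refine eq_top_iff.2 fun y _ r hr => ?_
  obtain ⟨n, hn⟩ := y.2 r hr
  exact ⟨n, Subtype.ext hn⟩

end Torsion

universe u

/-- `Γ_a = Γ̄_a` iff `a` is half-centred. -/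
theorem stmt7 (R : Type u) [CommRing R] (a : Ideal R) :
    (∀ (M : Type u) [AddCommGroup M] [Module R M], smallTorsion a M = largeTorsion a M) ↔
      (∀ (M : Type u) [AddCommGroup M] [Module R M],
        smallTorsion a M = ⊤ ↔ weakAssassin R M ⊆ {p : Ideal R | p.IsPrime ∧ a ≤ p}) := by
  constructor
  · intro h M _ _
    rw [h M]
    exact largeTorsion_eq_top_iff a
  · intro h M _ _
    refine le_antisymm (smallTorsion_le_largeTorsion a) fun x hx => ?_
    have hN : smallTorsion a (largeTorsion a M) = ⊤ :=
      (h _).2 ((largeTorsion_eq_top_iff a).1 (largeTorsion_largeTorsion_eq_top a))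
    exact map_mem_smallTorsion a (largeTorsion a M).subtype (hN ▸ Submodule.mem_top : ⟨x, hx⟩ ∈ _)
end
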